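/- arXiv:2110.11530 — 2 statements merged into one kernel-verified Lean document; each statement's English description precedes it below -/
import Mathlib

section
/- Let p > 0 and q ≠ 0 be real numbers, let 0 < ε ≤ |q|/(2p), and let λ* > 1. Then there exists Δ* > 0 such that for every real Δ with |Δ| ≥ Δ*, the matrix A_Δ = [[p, q], [Δ·p, p⁻¹ + Δ·q]] (which has determinant 1) satisfies: for every nonzero vector v = (x, y) ∈ ℝ² with |x| ≤ ε·|y|, the image (x′, y′) = A_Δ v again satisfies |x′| ≤ ε·|y′|, and ‖A_Δ v‖ ≥ λ*·‖v‖ in the Euclidean norm. In other words, A_Δ maps the cone C_ε into itself and expands every vector of C_ε by at least the factor λ*. -/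
/-!
Since `p ε ≤ |q| / 2`, on the cone the term `q y` dominates `p x`, so the first coordinate
`x' = p x + q y` of the image is comparable to `|q| |y|` from both sides. The second coordinate
is `y' = Δ x' + p⁻¹ y`, hence `|y'| ≥ (|Δ| |q| / 2 - p⁻¹) |y|` grows linearly in `|Δ|`, while
`|x'|` and `‖(x, y)‖ ≤ (1 + ε) |y|` stay bounded by multiples of `|y|`. Taking `|Δ|` large makes
`|y'|` beat both `|x'| / ε` and `λ* ‖(x, y)‖`.
-/

lemma sqrt_sq_add_sq_le_of_abs_le_mul {x y ε : ℝ} (hε : 0 ≤ ε) (h : |x| ≤ ε * |y|) :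
    √(x ^ 2 + y ^ 2) ≤ (1 + ε) * |y| := by
  rw [Real.sqrt_le_left (by positivity)]
  have hx : x ^ 2 ≤ (ε * |y|) ^ 2 := sq_le_sq' (by linarith [neg_abs_le x]) (le_of_abs_le h)
  nlinarith [sq_abs y, mul_nonneg hε (sq_nonneg y)]

section ConeImage

variable {p q ε Δ x y : ℝ}

lemma mul_abs_le_of_abs_le_mul (hp : 0 < p) (hε : ε ≤ |q| / (2 * p)) (h : |x| ≤ ε * |y|) :
    p * |x| ≤ |q| / 2 * |y| :=
  calc p * |x| ≤ p * (ε * |y|) := by gcongr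
    _ ≤ p * (|q| / (2 * p) * |y|) := by gcongr
    _ = |q| / 2 * |y| := by field_simp

lemma half_mul_le_abs_add (hp : 0 < p) (hx : p * |x| ≤ |q| / 2 * |y|) :
    |q| / 2 * |y| ≤ |p * x + q * y| := by
  have := abs_sub_abs_le_abs_add (q * y) (p * x)
  rw [abs_mul, abs_mul, abs_of_pos hp, add_comm (q * y)] at this
  linarith

lemma abs_add_le_three_halves_mul (hp : 0 < p) (hx : p * |x| ≤ |q| / 2 * |y|) :
    |p * x + q * y| ≤ 3 * |q| / 2 * |y| := by
  have := abs_add_le (p * x) (q * y)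
  rw [abs_mul, abs_mul, abs_of_pos hp] at this
  linarith

lemma mul_le_abs_second_coord (hp : 0 < p) (hx : p * |x| ≤ |q| / 2 * |y|) :
    (|Δ| * |q| / 2 - p⁻¹) * |y| ≤ |Δ * p * x + (p⁻¹ + Δ * q) * y| := by
  have hx' : |Δ| * (|q| / 2 * |y|) ≤ |Δ| * |p * x + q * y| :=
    mul_le_mul_of_nonneg_left (half_mul_le_abs_add hp hx) (abs_nonneg Δ)
  have := abs_sub_abs_le_abs_add (Δ * (p * x + q * y)) (p⁻¹ * y)
  rw [abs_mul, abs_mul, abs_of_pos (inv_pos.mpr hp)] at this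
  calc (|Δ| * |q| / 2 - p⁻¹) * |y| = |Δ| * (|q| / 2 * |y|) - p⁻¹ * |y| := by ring
    _ ≤ |Δ * (p * x + q * y) + p⁻¹ * y| := by linarith
    _ = |Δ * p * x + (p⁻¹ + Δ * q) * y| := by ring_nf

end ConeImage

/-- The matrix `A_Δ = [[p, q], [Δp, p⁻¹ + Δq]]` (of determinant 1) preserves the
almost-vertical cone `{(x,y) : |x| ≤ ε |y|}` and expands every nonzero vector of the cone
by at least the factor `λ*` (Euclidean norm), provided `0 < ε ≤ |q|/(2p)` and `|Δ|` is
sufficiently large. -/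
theorem stmt2 (p q eps lamStar : ℝ) (hp : 0 < p) (hq : q ≠ 0)
    (heps : 0 < eps) (heps2 : eps ≤ |q| / (2 * p)) (hlam : 1 < lamStar) :
    ∃ DeltaStar > (0 : ℝ), ∀ Delta : ℝ, DeltaStar ≤ |Delta| →
      p * (p⁻¹ + Delta * q) - q * (Delta * p) = 1 ∧
      ∀ x y : ℝ, ¬(x = 0 ∧ y = 0) → |x| ≤ eps * |y| →
        |p * x + q * y| ≤ eps * |Delta * p * x + (p⁻¹ + Delta * q) * y| ∧
        lamStar * Real.sqrt (x ^ 2 + y ^ 2) ≤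
          Real.sqrt ((p * x + q * y) ^ 2 + (Delta * p * x + (p⁻¹ + Delta * q) * y) ^ 2) := by
  have hq' : 0 < |q| := abs_pos.mpr hq
  set M := max (3 * |q| / (2 * eps)) (lamStar * (1 + eps))
  refine ⟨2 / |q| * (M + p⁻¹), by positivity, fun Delta hDelta => ⟨by field_simp; ring, ?_⟩⟩
  have hMDelta : M ≤ |Delta| * |q| / 2 - p⁻¹ := by
    rw [div_mul_eq_mul_div, div_le_iff₀ hq'] at hDelta
    linarith
  intro x y _ hcone
  have hx := mul_abs_le_of_abs_le_mul hp heps2 hcone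
  have hy' : M * |y| ≤ |Delta * p * x + (p⁻¹ + Delta * q) * y| :=
    (mul_le_mul_of_nonneg_right hMDelta (abs_nonneg y)).trans (mul_le_abs_second_coord hp hx)
  constructor
  · calc |p * x + q * y| ≤ 3 * |q| / 2 * |y| := abs_add_le_three_halves_mul hp hx
      _ = eps * (3 * |q| / (2 * eps) * |y|) := by field_simp
      _ ≤ eps * (M * |y|) := by gcongr; exact le_max_left _ _
      _ ≤ eps * |Delta * p * x + (p⁻¹ + Delta * q) * y| := by gcongr
  · calc lamStar * √(x ^ 2 + y ^ 2) ≤ lamStar * ((1 + eps) * |y|) := by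
          gcongr
          exact sqrt_sq_add_sq_le_of_abs_le_mul heps.le hcone
      _ ≤ M * |y| := by rw [← mul_assoc]; gcongr; exact le_max_right _ _
      _ ≤ |Delta * p * x + (p⁻¹ + Delta * q) * y| := hy'
      _ ≤ √((p * x + q * y) ^ 2 + (Delta * p * x + (p⁻¹ + Delta * q) * y) ^ 2) :=
          Real.abs_le_sqrt (le_add_of_nonneg_left (sq_nonneg _))
end

section
/- Let p > 0 and q ≠ 0 be real numbers and let 0 < ε ≤ |q|/(2p). Then there exist constants c₁ > 0, c₂ > 0 and Δ* > 0, depending only on p, q and ε, such that for every real Δ with |Δ| ≥ Δ* and every nonzero vector v = (x, y) ∈ ℝ² with |x| ≤ ε·|y|, the matrix A_Δ = [[p, q], [Δ·p, p⁻¹ + Δ·q]] satisfies c₁·|Δ|·‖v‖ ≤ ‖A_Δ v‖ ≤ c₂·|Δ|·‖v‖ in the Euclidean norm. -/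
/-!
Write `a = p x + q y` for the first coordinate of `A_Δ v`; the second one is `Δ a + y / p`.
On the cone `|p x| ≤ p ε |y| ≤ |q| |y| / 2`, so `|a| ≥ |q| |y| / 2`, and once
`|Δ| ≥ 4 / (p |q|)` the term `y / p` costs at most half of that: the second coordinate alone is
at least `|Δ| |q| |y| / 4`, while `‖v‖ ≤ √(1 + ε²) |y|`. The upper bound is the crude estimate of
`‖A_Δ‖` by the sum of the absolute values of its entries, which grows linearly in `|Δ|`.
-/

namespace Real

lemma abs_le_sqrt_sq_add_sq_left (a b : ℝ) : |a| ≤ √(a ^ 2 + b ^ 2) :=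
  abs_le_sqrt (by nlinarith [sq_nonneg b])

lemma abs_le_sqrt_sq_add_sq_right (a b : ℝ) : |b| ≤ √(a ^ 2 + b ^ 2) :=
  abs_le_sqrt (by nlinarith [sq_nonneg a])

lemma sqrt_sq_add_sq_le_abs_add_abs (a b : ℝ) : √(a ^ 2 + b ^ 2) ≤ |a| + |b| :=
  (sqrt_le_left (by positivity)).mpr
    (by nlinarith [abs_nonneg a, abs_nonneg b, sq_abs a, sq_abs b])

lemma abs_mul_add_mul_le (a b x y : ℝ) : |a * x + b * y| ≤ (|a| + |b|) * √(x ^ 2 + y ^ 2) :=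
  calc |a * x + b * y| ≤ |a| * |x| + |b| * |y| := by
        simpa only [abs_mul] using abs_add_le (a * x) (b * y)
    _ ≤ |a| * √(x ^ 2 + y ^ 2) + |b| * √(x ^ 2 + y ^ 2) := by
        gcongr
        exacts [abs_le_sqrt_sq_add_sq_left x y, abs_le_sqrt_sq_add_sq_right x y]
    _ = (|a| + |b|) * √(x ^ 2 + y ^ 2) := by ring

lemma sqrt_sq_add_sq_le_of_abs_le_mul {ε x y : ℝ} (h : |x| ≤ ε * |y|) :
    √(x ^ 2 + y ^ 2) ≤ √(1 + ε ^ 2) * |y| := by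
  have hx : x ^ 2 ≤ ε ^ 2 * y ^ 2 := by
    rw [← sq_abs x, ← sq_abs y, ← mul_pow]
    exact pow_le_pow_left₀ (abs_nonneg x) h 2
  calc √(x ^ 2 + y ^ 2) ≤ √((1 + ε ^ 2) * y ^ 2) := sqrt_le_sqrt (by linarith)
    _ = √(1 + ε ^ 2) * |y| := by rw [sqrt_mul (by positivity), sqrt_sq_eq_abs]

end Real

namespace AlmostVerticalCone

variable {p q ε x y : ℝ}

lemma abs_first_row_ge (hp : 0 ≤ p) (hpε : p * ε ≤ |q| / 2)
    (hcone : |x| ≤ ε * |y|) : |q| * |y| / 2 ≤ |p * x + q * y| := by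
  have hpx : |p * x| ≤ |q| * |y| / 2 :=
    calc |p * x| = p * |x| := by rw [abs_mul, abs_of_nonneg hp]
      _ ≤ p * (ε * |y|) := mul_le_mul_of_nonneg_left hcone hp
      _ = p * ε * |y| := by ring
      _ ≤ |q| / 2 * |y| := mul_le_mul_of_nonneg_right hpε (abs_nonneg y)
      _ = |q| * |y| / 2 := by ring
  have := abs_sub_abs_le_abs_sub (q * y) (-(p * x))
  rw [abs_neg, abs_mul, sub_neg_eq_add, add_comm] at this
  linarith

lemma second_row_eq (hp : p ≠ 0) (Δ : ℝ) :
    Δ * p * x + (p⁻¹ + Δ * q) * y = Δ * (p * x + q * y) + y / p := by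
  field_simp
  ring

lemma abs_second_row_ge (hp : 0 < p) (hq : q ≠ 0) (hpε : p * ε ≤ |q| / 2)
    (hcone : |x| ≤ ε * |y|) {Δ : ℝ} (hΔ : 4 / (p * |q|) ≤ |Δ|) :
    |Δ| * |q| * |y| / 4 ≤ |Δ * p * x + (p⁻¹ + Δ * q) * y| := by
  have hpq : 0 < p * |q| := mul_pos hp (abs_pos.mpr hq)
  have ha := abs_first_row_ge hp.le hpε hcone
  -- `|y / p| ≤ |Δ| |q| |y| / 4` is exactly the threshold `|Δ| ≥ 4 / (p |q|)`.
  have hy : |y / p| ≤ |Δ| * |q| * |y| / 4 := by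
    rw [div_le_iff₀ hpq] at hΔ
    rw [abs_div, abs_of_pos hp, div_le_iff₀ hp]
    nlinarith [abs_nonneg y]
  have hΔa : |Δ| * (|q| * |y| / 2) ≤ |Δ * (p * x + q * y)| := by
    rw [abs_mul]; exact mul_le_mul_of_nonneg_left ha (abs_nonneg Δ)
  have := abs_sub_abs_le_abs_sub (Δ * (p * x + q * y)) (-(y / p))
  rw [abs_neg, sub_neg_eq_add, ← second_row_eq hp.ne'] at this
  linarith

lemma sum_abs_entries_le (hp : 0 < p) (hq : q ≠ 0) {Δ : ℝ} (hΔ : 4 / (p * |q|) ≤ |Δ|) :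
    |p| + |q| + (|Δ * p| + |p⁻¹ + Δ * q|) ≤
      ((p + |q|) * (1 + p * |q| / 4) + |q| / 4) * |Δ| := by
  have hpq : 0 < p * |q| := mul_pos hp (abs_pos.mpr hq)
  rw [div_le_iff₀ hpq] at hΔ
  have hinv : p⁻¹ ≤ |Δ| * |q| / 4 := by
    rw [inv_le_iff_one_le_mul₀ hp]; nlinarith
  have h22 : |p⁻¹ + Δ * q| ≤ p⁻¹ + |Δ| * |q| := by
    simpa only [abs_mul, abs_inv, abs_of_pos hp] using abs_add_le p⁻¹ (Δ * q)
  rw [abs_mul, abs_of_pos hp]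
  nlinarith [mul_le_mul_of_nonneg_left hΔ (by positivity : 0 ≤ p + |q|)]

end AlmostVerticalCone

open AlmostVerticalCone in
theorem stmt3_general (p q eps : ℝ) (hp : 0 < p) (hq : q ≠ 0)
    (heps2 : eps ≤ |q| / (2 * p)) :
    ∃ c₁ > (0 : ℝ), ∃ c₂ > (0 : ℝ), ∃ DeltaStar > (0 : ℝ),
      ∀ Delta : ℝ, DeltaStar ≤ |Delta| →
        ∀ x y : ℝ, ¬(x = 0 ∧ y = 0) → |x| ≤ eps * |y| →
          c₁ * |Delta| * Real.sqrt (x ^ 2 + y ^ 2) ≤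
            Real.sqrt ((p * x + q * y) ^ 2 + (Delta * p * x + (p⁻¹ + Delta * q) * y) ^ 2) ∧
          Real.sqrt ((p * x + q * y) ^ 2 + (Delta * p * x + (p⁻¹ + Delta * q) * y) ^ 2) ≤
            c₂ * |Delta| * Real.sqrt (x ^ 2 + y ^ 2) := by
  have hq' : 0 < |q| := abs_pos.mpr hq
  have hpε : p * eps ≤ |q| / 2 := by
    rw [le_div_iff₀ (by positivity)] at heps2
    linarith
  have hs : 0 < √(1 + eps ^ 2) := Real.sqrt_pos.mpr (by positivity)
  refine ⟨|q| / (4 * √(1 + eps ^ 2)), by positivity, (p + |q|) * (1 + p * |q| / 4) + |q| / 4,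
    by positivity, 4 / (p * |q|), by positivity, fun Delta hΔ x y _ hcone => ⟨?_, ?_⟩⟩
  · calc |q| / (4 * √(1 + eps ^ 2)) * |Delta| * √(x ^ 2 + y ^ 2)
        ≤ |q| / (4 * √(1 + eps ^ 2)) * |Delta| * (√(1 + eps ^ 2) * |y|) := by
          gcongr; exact Real.sqrt_sq_add_sq_le_of_abs_le_mul hcone
      _ = |Delta| * |q| * |y| / 4 := by field_simp
      _ ≤ |Delta * p * x + (p⁻¹ + Delta * q) * y| := abs_second_row_ge hp hq hpε hcone hΔ
      _ ≤ _ := Real.abs_le_sqrt_sq_add_sq_right _ _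
  · calc _ ≤ |p * x + q * y| + |Delta * p * x + (p⁻¹ + Delta * q) * y| :=
          Real.sqrt_sq_add_sq_le_abs_add_abs _ _
      _ ≤ (|p| + |q|) * √(x ^ 2 + y ^ 2) + (|Delta * p| + |p⁻¹ + Delta * q|) * √(x ^ 2 + y ^ 2) :=
          add_le_add (Real.abs_mul_add_mul_le _ _ _ _) (Real.abs_mul_add_mul_le _ _ _ _)
      _ ≤ _ := by
          rw [← add_mul]
          exact mul_le_mul_of_nonneg_right (sum_abs_entries_le hp hq hΔ) (Real.sqrt_nonneg _)

/-- On the almost-vertical cone `{(x,y) : |x| ≤ ε |y|}` with `0 < ε ≤ |q|/(2p)`, the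
matrix `A_Δ = [[p, q], [Δp, p⁻¹ + Δq]]` expands every vector by a factor comparable to
`|Δ|`: there are constants `c₁, c₂ > 0` and `Δ* > 0` (depending only on `p, q, ε`) with
`c₁ |Δ| ‖v‖ ≤ ‖A_Δ v‖ ≤ c₂ |Δ| ‖v‖` for all `|Δ| ≥ Δ*` and all nonzero `v` in the cone. -/
theorem stmt3 (p q eps : ℝ) (hp : 0 < p) (hq : q ≠ 0)
    (heps : 0 < eps) (heps2 : eps ≤ |q| / (2 * p)) :
    ∃ c₁ > (0 : ℝ), ∃ c₂ > (0 : ℝ), ∃ DeltaStar > (0 : ℝ),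
      ∀ Delta : ℝ, DeltaStar ≤ |Delta| →
        ∀ x y : ℝ, ¬(x = 0 ∧ y = 0) → |x| ≤ eps * |y| →
          c₁ * |Delta| * Real.sqrt (x ^ 2 + y ^ 2) ≤
            Real.sqrt ((p * x + q * y) ^ 2 + (Delta * p * x + (p⁻¹ + Delta * q) * y) ^ 2) ∧
          Real.sqrt ((p * x + q * y) ^ 2 + (Delta * p * x + (p⁻¹ + Delta * q) * y) ^ 2) ≤
            c₂ * |Delta| * Real.sqrt (x ^ 2 + y ^ 2) :=
  stmt3_general p q eps hp hq heps2
end
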